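/- arXiv:1312.0191 — 3 statements merged into one kernel-verified Lean document; each statement's English description precedes it below -/
import Mathlib

section
/- Let G_1,…,G_n be a finite collection of connected graphs, each with a chosen terminal vertex, and let G be their vertex-amalgamation. Then dim(G) ≤ (Σ_{i=1}^n dim(G_i)) + n − 1. -/
open SimpleGraph

def resolves {V : Type*} (G : SimpleGraph V) (W : Finset V) : Prop :=
  ∀ u v : V, (∀ w ∈ W, G.dist u w = G.dist v w) → u = v

noncomputable def metricDim {V : Type*} [Fintype V] (G : SimpleGraph V) : ℕ :=
  sInf {k | ∃ W : Finset V, resolves G W ∧ W.card = k}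

def IsVertexAmalMap {ι V : Type*} {Vi : ι → Type*}
    (Gs : ∀ i, SimpleGraph (Vi i)) (v0 : ∀ i, Vi i)
    (G : SimpleGraph V) (v : V) (f : ∀ i, Vi i → V) : Prop :=
  (∀ i, Function.Injective (f i)) ∧
  (∀ i, f i (v0 i) = v) ∧
  (∀ i x y, G.Adj (f i x) (f i y) ↔ (Gs i).Adj x y) ∧
  (∀ i j x y, i ≠ j → f i x = f j y → f i x = v) ∧
  (∀ a : V, ∃ i x, f i x = a) ∧
  (∀ a b : V, G.Adj a b → ∃ i x y, f i x = a ∧ f i y = b)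

def IsVertexAmal {ι V : Type*} {Vi : ι → Type*}
    (Gs : ∀ i, SimpleGraph (Vi i)) (v0 : ∀ i, Vi i)
    (G : SimpleGraph V) (v : V) : Prop :=
  ∃ f, IsVertexAmalMap Gs v0 G v f

def IsEdgeAmalMap {ι V : Type*} {Vi : ι → Type*}
    (Gs : ∀ i, SimpleGraph (Vi i)) (u0 w0 : ∀ i, Vi i)
    (G : SimpleGraph V) (u w : V) (f : ∀ i, Vi i → V) : Prop :=
  (∀ i, (Gs i).Adj (u0 i) (w0 i)) ∧
  (∀ i, Function.Injective (f i)) ∧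
  (∀ i, f i (u0 i) = u) ∧
  (∀ i, f i (w0 i) = w) ∧
  (∀ i x y, G.Adj (f i x) (f i y) ↔ (Gs i).Adj x y) ∧
  (∀ i j x y, i ≠ j → f i x = f j y → f i x = u ∨ f i x = w) ∧
  (∀ a : V, ∃ i x, f i x = a) ∧
  (∀ a b : V, G.Adj a b → ∃ i x y, f i x = a ∧ f i y = b)

def IsEdgeAmal {ι V : Type*} {Vi : ι → Type*}
    (Gs : ∀ i, SimpleGraph (Vi i)) (u0 w0 : ∀ i, Vi i)
    (G : SimpleGraph V) (u w : V) : Prop :=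
  ∃ f, IsEdgeAmalMap Gs u0 w0 G u w f

section FalseVertex

variable {α : Type*} {H : SimpleGraph α}

lemma chain_lemma (hH : H.Connected) (v0 : α) (W : Finset α) (w0 : α) (hw0 : w0 ∈ W)
    (s : ℕ) :
    ∀ x : α, (∀ w ∈ W, H.dist x w = H.dist x v0 + H.dist v0 w) →
      s ≤ H.dist x v0 →
      ∃ p : α, (∀ w ∈ W, H.dist p w = H.dist p v0 + H.dist v0 w) ∧
        s + H.dist p v0 = H.dist x v0 ∧ H.dist x p = s := by
  induction s with
  | zero => intro x hx _; exact ⟨x, hx, by simp, by simp⟩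
  | succ s ih =>
    intro x hx hs
    obtain ⟨p, hp, hpd, hxp⟩ := ih x hx (by omega)
    have hp1 : 1 ≤ H.dist p v0 := by omega
    obtain ⟨q, hq⟩ := (hH.preconnected p v0).exists_walk_length_eq_dist
    cases q with
    | nil => rw [dist_self] at hq; omega
    | cons hac q' =>
      rename_i c
      rw [Walk.length_cons] at hq
      have hcle : H.dist c v0 ≤ q'.length := H.dist_le q'
      have hpc1 : H.dist p c ≤ 1 := by
        simpa using H.dist_le (Walk.cons hac Walk.nil)
      have htri : H.dist p v0 ≤ H.dist p c + H.dist c v0 := hH.dist_triangle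
      have hm : H.dist c v0 + 1 = H.dist p v0 := by omega
      have hFc : ∀ w ∈ W, H.dist c w = H.dist c v0 + H.dist v0 w := by
        intro w hw
        have e1 : H.dist c w ≤ H.dist c v0 + H.dist v0 w := hH.dist_triangle
        have e2 : H.dist p w ≤ H.dist p c + H.dist c w := hH.dist_triangle
        have e3 := hp w hw
        omega
      refine ⟨c, hFc, by omega, ?_⟩
      have l1 : H.dist x c ≤ H.dist x p + H.dist p c := hH.dist_triangle
      have l2 : H.dist x w0 ≤ H.dist x c + H.dist c w0 := hH.dist_triangle
      have l3 := hx w0 hw0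
      have l4 := hFc w0 hw0
      omega

lemma false_dist (hH : H.Connected) (v0 : α) (W : Finset α) (hW : resolves H W)
    (w0 : α) (hw0 : w0 ∈ W) {x y : α}
    (hx : ∀ w ∈ W, H.dist x w = H.dist x v0 + H.dist v0 w)
    (hy : ∀ w ∈ W, H.dist y w = H.dist y v0 + H.dist v0 w)
    (hab : H.dist x v0 ≤ H.dist y v0) :
    H.dist y x + H.dist x v0 = H.dist y v0 := by
  obtain ⟨p, hp, hpd, hyp⟩ :=
    chain_lemma hH v0 W w0 hw0 (H.dist y v0 - H.dist x v0) y hy (by omega)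
  have hpv : H.dist p v0 = H.dist x v0 := by omega
  have hpx : p = x := by
    apply hW
    intro w hw
    rw [hp w hw, hx w hw, hpv]
  rw [hpx] at hyp
  omega

lemma exists_good (hH : H.Connected) (v0 : α) (W : Finset α) (hW : resolves H W) :
    ∃ S : Finset α, resolves H S ∧ S.card ≤ W.card + 1 ∧ S.Nonempty ∧
      ∀ x, x ≠ v0 → ∃ w ∈ S, H.dist x w ≠ H.dist x v0 + H.dist v0 w := by
  classical
  have hmono : ∀ (z : α), resolves H (insert z W) := by
    intro z u u' hu
    exact hW u u' fun w hw => hu w (Finset.mem_insert_of_mem hw)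
  by_cases hF : ∀ z, z ≠ v0 → ∃ w ∈ W, H.dist z w ≠ H.dist z v0 + H.dist v0 w
  · refine ⟨insert v0 W, hmono v0, Finset.card_insert_le _ _, ⟨v0, Finset.mem_insert_self _ _⟩, ?_⟩
    intro x hx
    obtain ⟨w, hw, hne⟩ := hF x hx
    exact ⟨w, Finset.mem_insert_of_mem hw, hne⟩
  · push_neg at hF
    obtain ⟨z, hz, hzF⟩ := hF
    have hWne : ∃ w0, w0 ∈ W := by
      by_contra hc
      push_neg at hc
      exact hz (hW z v0 fun w hw => absurd hw (hc w))
    obtain ⟨w0, hw0⟩ := hWne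
    refine ⟨insert z W, hmono z, Finset.card_insert_le _ _, ⟨z, Finset.mem_insert_self _ _⟩, ?_⟩
    intro x hx
    by_cases hxF : ∀ w ∈ W, H.dist x w = H.dist x v0 + H.dist v0 w
    · refine ⟨z, Finset.mem_insert_self _ _, ?_⟩
      have hxv : 1 ≤ H.dist x v0 := (hH.pos_dist_of_ne hx)
      have hzv : 1 ≤ H.dist z v0 := (hH.pos_dist_of_ne hz)
      have hcomm : H.dist x z = H.dist z x := H.dist_comm
      have hcomm2 : H.dist v0 z = H.dist z v0 := H.dist_comm
      rcases le_total (H.dist x v0) (H.dist z v0) with hle | hle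
      · have := false_dist hH v0 W hW w0 hw0 hxF hzF hle
        omega
      · have := false_dist hH v0 W hW w0 hw0 hzF hxF hle
        omega
    · push_neg at hxF
      obtain ⟨w, hw, hne⟩ := hxF
      exact ⟨w, Finset.mem_insert_of_mem hw, hne⟩

end FalseVertex

section Amal

variable {ι V : Type*} {Vi : ι → Type*}
  {Gs : ∀ i, SimpleGraph (Vi i)} {v0 : ∀ i, Vi i} {G : SimpleGraph V} {v : V}
  {f : ∀ i, Vi i → V}

lemma walk_bound (hmap : IsVertexAmalMap Gs v0 G v f) (hconn : ∀ i, (Gs i).Connected)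
    (L : ℕ) :
    ∀ {a b : V} (p : G.Walk a b), p.length = L →
      (∀ i (x y : Vi i), f i x = a → f i y = b → (Gs i).dist x y ≤ L) ∧
      (∀ i j (x : Vi i) (y : Vi j), i ≠ j → f i x = a → f j y = b →
        (Gs i).dist x (v0 i) + (Gs j).dist (v0 j) y ≤ L) := by
  obtain ⟨hinj, hv0, hadj, hcrossv, hsurj, hedge⟩ := hmap
  induction L with
  | zero =>
    intro a b p hp
    have hab : a = b := Walk.eq_of_length_eq_zero hp
    subst hab
    constructor
    · intro i x y hx hy
      have hxy : x = y := hinj i (hx.trans hy.symm)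
      subst hxy; simp
    · intro i j x y hij hx hy
      have h1 : f i x = v := hcrossv i j x y hij (hx.trans hy.symm)
      have h2 : f j y = v := hcrossv j i y x (Ne.symm hij) (hy.trans hx.symm)
      have hx0 : x = v0 i := hinj i (h1.trans (hv0 i).symm)
      have hy0 : y = v0 j := hinj j (h2.trans (hv0 j).symm)
      subst hx0; subst hy0; simp
  | succ L ih =>
    intro a b p hp
    cases p with
    | nil => simp at hp
    | cons hac q =>
      rename_i c
      rw [Walk.length_cons, Nat.succ_inj] at hp
      obtain ⟨k, x', z, hx', hz⟩ := hedge _ _ hac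
      have hkadj : (Gs k).Adj x' z := (hadj k x' z).mp (by rw [hx', hz]; exact hac)
      have hkz1 : (Gs k).dist x' z ≤ 1 := by
        simpa using (Gs k).dist_le (Walk.cons hkadj Walk.nil)
      have hq := ih q hp
      constructor
      · intro i x y hx hy
        by_cases hik : k = i
        · subst hik
          have hxx' : x' = x := hinj k (hx'.trans hx.symm)
          subst hxx'
          have h1 := hq.1 k z y hz hy
          have h2 : (Gs k).dist x' y ≤ (Gs k).dist x' z + (Gs k).dist z y :=
            (hconn k).dist_triangle
          omega
        · have hav : f k x' = v := hcrossv k i x' x hik (hx'.trans hx.symm)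
          have hx0 : x = v0 i := hinj i (((hx.trans hx'.symm).trans hav).trans (hv0 i).symm)
          have hx'0 : x' = v0 k := hinj k (hav.trans (hv0 k).symm)
          subst hx0
          have h1 := hq.2 k i z y hik hz hy
          omega
      · intro i j x y hij hx hy
        by_cases hik : k = i
        · subst hik
          have hxx' : x' = x := hinj k (hx'.trans hx.symm)
          subst hxx'
          have h1 := hq.2 k j z y hij hz hy
          have h2 : (Gs k).dist x' (v0 k) ≤ (Gs k).dist x' z + (Gs k).dist z (v0 k) :=
            (hconn k).dist_triangle
          omega
        · have hav : f k x' = v := hcrossv k i x' x hik (hx'.trans hx.symm)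
          have hx0 : x = v0 i := hinj i (((hx.trans hx'.symm).trans hav).trans (hv0 i).symm)
          have hx'0 : x' = v0 k := hinj k (hav.trans (hv0 k).symm)
          subst hx0
          rw [dist_self]
          by_cases hkj : k = j
          · subst hkj
            subst hx'0
            have h1 := hq.1 k z y hz hy
            have h2 : (Gs k).dist (v0 k) y ≤ (Gs k).dist (v0 k) z + (Gs k).dist z y :=
              (hconn k).dist_triangle
            omega
          · have h1 := hq.2 k j z y hkj hz hy
            omega

lemma amal_connected (hmap : IsVertexAmalMap Gs v0 G v f) (hconn : ∀ i, (Gs i).Connected) :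
    G.Connected := by
  obtain ⟨hinj, hv0, hadj, hcrossv, hsurj, hedge⟩ := hmap
  have hreach : ∀ a : V, G.Reachable a v := by
    intro a
    obtain ⟨i, x, hx⟩ := hsurj a
    obtain ⟨p⟩ := (hconn i).preconnected x (v0 i)
    have h1 : G.Reachable (f i x) (f i (v0 i)) :=
      ⟨p.map ⟨f i, fun h => (hadj i _ _).mpr h⟩⟩
    rwa [hx, hv0 i] at h1
  haveI : Nonempty V := ⟨v⟩
  exact ⟨fun a b => (hreach a).trans (hreach b).symm⟩

lemma dist_same (hmap : IsVertexAmalMap Gs v0 G v f) (hconn : ∀ i, (Gs i).Connected)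
    (i : ι) (x y : Vi i) : G.dist (f i x) (f i y) = (Gs i).dist x y := by
  have hG : G.Connected := amal_connected hmap hconn
  obtain ⟨hinj, hv0, hadj, hcrossv, hsurj, hedge⟩ := hmap
  apply le_antisymm
  · obtain ⟨p, hp⟩ := ((hconn i).preconnected x y).exists_walk_length_eq_dist
    have := G.dist_le (p.map ⟨f i, fun h => (hadj i _ _).mpr h⟩)
    rwa [Walk.length_map, hp] at this
  · obtain ⟨q, hq⟩ := (hG.preconnected (f i x) (f i y)).exists_walk_length_eq_dist
    have := (walk_bound ⟨hinj, hv0, hadj, hcrossv, hsurj, hedge⟩ hconn q.length q rfl).1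
      i x y rfl rfl
    omega

lemma dist_cross (hmap : IsVertexAmalMap Gs v0 G v f) (hconn : ∀ i, (Gs i).Connected)
    {i j : ι} (hij : i ≠ j) (x : Vi i) (y : Vi j) :
    G.dist (f i x) (f j y) = (Gs i).dist x (v0 i) + (Gs j).dist (v0 j) y := by
  have hG : G.Connected := amal_connected hmap hconn
  have hv0 := hmap.2.1
  apply le_antisymm
  · have htri : G.dist (f i x) (f j y) ≤ G.dist (f i x) v + G.dist v (f j y) :=
      hG.dist_triangle
    have h1 : G.dist (f i x) v = (Gs i).dist x (v0 i) := by
      rw [← hv0 i]; exact dist_same hmap hconn i x (v0 i)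
    have h2 : G.dist v (f j y) = (Gs j).dist (v0 j) y := by
      rw [← hv0 j]; exact dist_same hmap hconn j (v0 j) y
    omega
  · obtain ⟨q, hq⟩ := (hG.preconnected (f i x) (f j y)).exists_walk_length_eq_dist
    have := (walk_bound hmap hconn q.length q rfl).2 i j x y hij rfl rfl
    omega

end Amal

lemma exists_min_resolving {α : Type*} [Fintype α] {H : SimpleGraph α} (hH : H.Connected) :
    ∃ W : Finset α, resolves H W ∧ W.card = metricDim H := by
  have huniv : resolves H Finset.univ := by
    intro u u' h
    have := h u (Finset.mem_univ u)
    rw [dist_self] at this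
    exact (hH.dist_eq_zero_iff.mp this.symm).symm
  have hne : {k | ∃ W : Finset α, resolves H W ∧ W.card = k}.Nonempty :=
    ⟨Finset.univ.card, Finset.univ, huniv, rfl⟩
  exact Nat.sInf_mem hne

theorem stmt2 {V : Type*} [Fintype V] (n : ℕ) (hn : 1 ≤ n)
    {Vi : Fin n → Type*} [∀ i, Fintype (Vi i)]
    (Gs : ∀ i, SimpleGraph (Vi i)) (hconn : ∀ i, (Gs i).Connected)
    (v0 : ∀ i, Vi i) (G : SimpleGraph V) (v : V)
    (h : IsVertexAmal Gs v0 G v) :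
    metricDim G ≤ (∑ i, metricDim (Gs i)) + n - 1 := by
  classical
  obtain ⟨f, hmap⟩ := h
  have hinj := hmap.1
  have hv0 := hmap.2.1
  have hsurj := hmap.2.2.2.2.1
  have hG : G.Connected := amal_connected hmap hconn
  set i0 : Fin n := ⟨0, hn⟩ with hi0
  have hex : ∀ i : Fin n, ∃ S : Finset (Vi i), resolves (Gs i) S ∧
      S.card ≤ metricDim (Gs i) + (if i = i0 then 0 else 1) ∧
      (i ≠ i0 → S.Nonempty ∧
        ∀ x, x ≠ v0 i → ∃ w ∈ S, (Gs i).dist x w ≠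
          (Gs i).dist x (v0 i) + (Gs i).dist (v0 i) w) := by
    intro i
    obtain ⟨W, hWres, hWcard⟩ := exists_min_resolving (hconn i)
    by_cases hi : i = i0
    · exact ⟨W, hWres, by simp [hi, hWcard], fun hne => absurd hi hne⟩
    · obtain ⟨S, h1, h2, h3, h4⟩ := exists_good (hconn i) (v0 i) W hWres
      exact ⟨S, h1, by simp [hi]; omega, fun _ => ⟨h3, h4⟩⟩
  choose S hres hcard hgood using hex
  set T : Finset V := Finset.univ.biUnion (fun i => (S i).image (f i)) with hT
  -- resolving
  have hTres : resolves G T := by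
    intro u u' hdists
    obtain ⟨i, x, hx⟩ := hsurj u
    obtain ⟨j, y, hy⟩ := hsurj u'
    subst hx; subst hy
    have key : ∀ k, ∀ w ∈ S k, G.dist (f i x) (f k w) = G.dist (f j y) (f k w) := by
      intro k w hw
      exact hdists (f k w) (Finset.mem_biUnion.mpr
        ⟨k, Finset.mem_univ k, Finset.mem_image_of_mem (f k) hw⟩)
    by_cases hij : i = j
    · subst hij
      have hxy : x = y := by
        apply hres i
        intro w hw
        have := key i w hw
        rwa [dist_same hmap hconn i x w, dist_same hmap hconn i y w] at this
      rw [hxy]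
    · -- cross case
      rcases Nat.eq_zero_or_pos ((Gs i).dist x (v0 i)) with ha0 | hapos
      · -- x = v0 i, so u = v; show y = v0 j
        have hx0 : x = v0 i := (hconn i).dist_eq_zero_iff.mp ha0
        have hfix : f i x = f j (v0 j) := by rw [hx0, hv0 i, ← hv0 j]
        have hy0 : y = v0 j := by
          apply hres j
          intro w hw
          have hk := key j w hw
          rw [hfix, dist_same hmap hconn j (v0 j) w,
            dist_same hmap hconn j y w] at hk
          omega
        rw [hfix, hy0]
      rcases Nat.eq_zero_or_pos ((Gs j).dist y (v0 j)) with hb0 | hbpos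
      · have hy0 : y = v0 j := (hconn j).dist_eq_zero_iff.mp hb0
        have hfjy : f j y = f i (v0 i) := by rw [hy0, hv0 j, ← hv0 i]
        have hx0 : x = v0 i := by
          apply hres i
          intro w hw
          have hk := key i w hw
          rw [hfjy, dist_same hmap hconn i (v0 i) w,
            dist_same hmap hconn i x w] at hk
          omega
        rw [hfjy, hx0]
      · -- both positive
        exfalso
        have hSine : (S i).Nonempty := by
          rcases (S i).eq_empty_or_nonempty with he | hne
          · exfalso
            have hx0 : x = v0 i := by
              apply hres i
              intro w hw
              rw [he] at hw
              exact absurd hw (Finset.notMem_empty w)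
            rw [hx0, dist_self] at hapos
            omega
          · exact hne
        have hSjne : (S j).Nonempty := by
          rcases (S j).eq_empty_or_nonempty with he | hne
          · exfalso
            have hy0 : y = v0 j := by
              apply hres j
              intro w hw
              rw [he] at hw
              exact absurd hw (Finset.notMem_empty w)
            rw [hy0, dist_self] at hbpos
            omega
          · exact hne
        obtain ⟨wi, hwi⟩ := hSine
        obtain ⟨wj, hwj⟩ := hSjne
        -- a ≤ b
        have hab1 : (Gs i).dist x (v0 i) ≤ (Gs j).dist y (v0 j) := by
          have hk := key j wj hwj
          rw [dist_cross hmap hconn hij x wj, dist_same hmap hconn j y wj] at hk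
          have htri : (Gs j).dist y wj ≤ (Gs j).dist y (v0 j) + (Gs j).dist (v0 j) wj :=
            (hconn j).dist_triangle
          omega
        have hab2 : (Gs j).dist y (v0 j) ≤ (Gs i).dist x (v0 i) := by
          have hk := key i wi hwi
          rw [dist_same hmap hconn i x wi,
            dist_cross hmap hconn (Ne.symm hij) y wi] at hk
          have htri : (Gs i).dist x wi ≤ (Gs i).dist x (v0 i) + (Gs i).dist (v0 i) wi :=
            (hconn i).dist_triangle
          omega
        -- false vertex property on both sides
        have hFlsx : ∀ w ∈ S i, (Gs i).dist x w =
            (Gs i).dist x (v0 i) + (Gs i).dist (v0 i) w := by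
          intro w hw
          have hk := key i w hw
          rw [dist_same hmap hconn i x w,
            dist_cross hmap hconn (Ne.symm hij) y w] at hk
          omega
        have hFlsy : ∀ w ∈ S j, (Gs j).dist y w =
            (Gs j).dist y (v0 j) + (Gs j).dist (v0 j) w := by
          intro w hw
          have hk := key j w hw
          rw [dist_cross hmap hconn hij x w, dist_same hmap hconn j y w] at hk
          omega
        have hone : i ≠ i0 ∨ j ≠ i0 := by
          by_contra hc
          push_neg at hc
          exact hij (hc.1.trans hc.2.symm)
        have hxne : x ≠ v0 i := by
          intro hxx; rw [hxx, dist_self] at hapos; omega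
        have hyne : y ≠ v0 j := by
          intro hyy; rw [hyy, dist_self] at hbpos; omega
        rcases hone with hi | hj
        · obtain ⟨w, hw, hne⟩ := (hgood i hi).2 x hxne
          exact hne (hFlsx w hw)
        · obtain ⟨w, hw, hne⟩ := (hgood j hj).2 y hyne
          exact hne (hFlsy w hw)
  -- cardinality
  have hTle : metricDim G ≤ T.card := Nat.sInf_le ⟨T, hTres, rfl⟩
  have hcard1 : T.card ≤ ∑ i, (S i).card := by
    calc T.card ≤ ∑ i, ((S i).image (f i)).card := Finset.card_biUnion_le
    _ ≤ ∑ i, (S i).card := Finset.sum_le_sum fun i _ => Finset.card_image_le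
  have hcard2 : ∑ i, (S i).card ≤
      (∑ i, metricDim (Gs i)) + ∑ i : Fin n, (if i = i0 then 0 else 1) := by
    rw [← Finset.sum_add_distrib]
    exact Finset.sum_le_sum fun i _ => hcard i
  have hcard3 : (∑ i : Fin n, (if i = i0 then 0 else 1)) + 1 = n := by
    have h1 : (∑ i : Fin n, ((if i = i0 then 0 else 1) + (if i = i0 then 1 else 0)))
        = ∑ i : Fin n, 1 := by
      apply Finset.sum_congr rfl
      intro i _
      by_cases hi : i = i0 <;> simp [hi]
    rw [Finset.sum_add_distrib] at h1
    have h2 : (∑ i : Fin n, (if i = i0 then 1 else 0)) = 1 := by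
      simp [Finset.sum_ite_eq']
    have h3 : (∑ _i : Fin n, 1) = n := by simp
    omega
  omega
end

section
/- Let H be the edge-amalgamation of connected graphs G_1,…,G_n along a common edge e = uv, and let W be a resolving set of H. Then for every i, |W ∩ (V(G_i) \ {u,v})| ≥ dim(G_i) − 2. -/
open SimpleGraph

section Aux

variable {ι V : Type*} {Vi : ι → Type*}
  {Gs : ∀ i, SimpleGraph (Vi i)} {u0 w0 : ∀ i, Vi i}
  {H : SimpleGraph V} {u w : V} {f : ∀ i, Vi i → V}

/-- Any walk from inside the image of `f i` to outside passes through `u` or `w`. -/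
lemma amal_passes
    (hsep : ∀ i j x y, i ≠ j → f i x = f j y → f i x = u ∨ f i x = w)
    (hedge : ∀ a b : V, H.Adj a b → ∃ i x y, f i x = a ∧ f i y = b)
    (i : ι) :
    ∀ {a b : V} (p : H.Walk b a), b ∈ Set.range (f i) → a ∉ Set.range (f i) →
      u ∈ p.support ∨ w ∈ p.support := by
  intro a b p
  induction p with
  | nil => intro hb ha; exact absurd hb ha
  | @cons b d _ hadj q ih =>
    intro hb ha
    obtain ⟨x, hx⟩ := hb
    obtain ⟨j, x', y', hx', hy'⟩ := hedge _ _ hadj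
    by_cases hji : j = i
    · subst hji
      have hd : d ∈ Set.range (f j) := ⟨y', hy'⟩
      rcases ih hd ha with h1 | h1
      · exact Or.inl (by simp [Walk.support_cons, h1])
      · exact Or.inr (by simp [Walk.support_cons, h1])
    · have := hsep j i x' x hji (by rw [hx', hx])
      rw [hx'] at this
      rcases this with h1 | h1
      · exact Or.inl (by simp [Walk.support_cons, ← h1])
      · exact Or.inr (by simp [Walk.support_cons, ← h1])

lemma amal_dist_le
    (hiff : ∀ i x y, H.Adj (f i x) (f i y) ↔ (Gs i).Adj x y)
    (hconn : ∀ i, (Gs i).Connected) (i : ι) (x y : Vi i) :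
    H.dist (f i x) (f i y) ≤ (Gs i).dist x y := by
  obtain ⟨p, hp⟩ := (hconn i).exists_walk_length_eq_dist x y
  have key : H.dist (f i x) (f i y) ≤
      (p.map ⟨f i, fun hxy => (hiff i _ _).2 hxy⟩).length := SimpleGraph.dist_le _
  rw [Walk.length_map, hp] at key
  exact key

lemma amal_pull
    (hadj0 : ∀ i, (Gs i).Adj (u0 i) (w0 i))
    (hinj : ∀ i, Function.Injective (f i))
    (hu : ∀ i, f i (u0 i) = u) (hw : ∀ i, f i (w0 i) = w)
    (hiff : ∀ i x y, H.Adj (f i x) (f i y) ↔ (Gs i).Adj x y)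
    (hsep : ∀ i j x y, i ≠ j → f i x = f j y → f i x = u ∨ f i x = w)
    (hedge : ∀ a b : V, H.Adj a b → ∃ i x y, f i x = a ∧ f i y = b)
    (hconn : ∀ i, (Gs i).Connected) (i : ι) :
    ∀ (m : ℕ) {b c : V} (p : H.Walk b c), p.length ≤ m →
      ∀ x y : Vi i, b = f i x → c = f i y → (Gs i).dist x y ≤ p.length := by
  classical
  intro m
  induction m with
  | zero =>
    intro b c p hp x y hb hc
    cases p with
    | nil =>
      have : x = y := hinj i (by rw [← hb, hc])
      simp [this]
    | cons hadj q => simp at hp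
  | succ m ih =>
    intro b c p hp x y hb hc
    cases p with
    | nil =>
      have : x = y := hinj i (by rw [← hb, hc])
      simp [this]
    | @cons _ d _ hadj q =>
      subst hb; subst hc
      rw [Walk.length_cons] at hp ⊢
      by_cases hd : d ∈ Set.range (f i)
      · obtain ⟨z, rfl⟩ := hd
        have haxz : (Gs i).Adj x z := (hiff i x z).1 hadj
        have h1 : (Gs i).dist z y ≤ q.length :=
          ih q (Nat.le_of_succ_le_succ hp) z y rfl rfl
        calc (Gs i).dist x y ≤ (Gs i).dist x z + (Gs i).dist z y :=
              (hconn i).dist_triangle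
          _ ≤ 1 + q.length := by
              have : (Gs i).dist x z = 1 := dist_eq_one_iff_adj.2 haxz
              omega
          _ = q.length + 1 := by omega
      · -- first vertex is u or w
        have hbuw : f i x = u ∨ f i x = w := by
          obtain ⟨j, x', y', hx', hy'⟩ := hedge _ _ hadj
          by_cases hji : j = i
          · subst hji; exact absurd ⟨y', hy'⟩ hd
          · have := hsep j i x' x hji (by rw [hx'])
            rw [hx'] at this; exact this
        have hx : x = u0 i ∨ x = w0 i := by
          rcases hbuw with h1 | h1
          · exact Or.inl (hinj i (by rw [h1, hu i]))
          · exact Or.inr (hinj i (by rw [h1, hw i]))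
        -- q goes from outside back to inside, so passes through u or w
        have ht : u ∈ q.support ∨ w ∈ q.support := by
          have := amal_passes hsep hedge i q.reverse ⟨y, rfl⟩ hd
          simpa [Walk.support_reverse] using this
        obtain ⟨t0, ht0, hts⟩ : ∃ t0 : Vi i,
            (t0 = u0 i ∨ t0 = w0 i) ∧ f i t0 ∈ q.support := by
          rcases ht with h1 | h1
          · exact ⟨u0 i, Or.inl rfl, by rw [hu i]; exact h1⟩
          · exact ⟨w0 i, Or.inr rfl, by rw [hw i]; exact h1⟩
        have hlen : (q.dropUntil _ hts).length ≤ q.length :=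
          Walk.length_dropUntil_le q hts
        have h2 : (Gs i).dist t0 y ≤ (q.dropUntil _ hts).length :=
          ih _ (le_trans hlen (Nat.le_of_succ_le_succ hp)) t0 y rfl rfl
        have hxt : (Gs i).dist x t0 ≤ 1 := by
          rcases hx with rfl | rfl <;> rcases ht0 with rfl | rfl
          · simp [SimpleGraph.dist_self]
          · exact le_of_eq (dist_eq_one_iff_adj.2 (hadj0 i))
          · exact le_of_eq (dist_eq_one_iff_adj.2 (hadj0 i).symm)
          · simp [SimpleGraph.dist_self]
        calc (Gs i).dist x y ≤ (Gs i).dist x t0 + (Gs i).dist t0 y :=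
              (hconn i).dist_triangle
          _ ≤ 1 + (q.dropUntil _ hts).length := by omega
          _ ≤ q.length + 1 := by omega

lemma amal_reachable
    (hiff : ∀ i x y, H.Adj (f i x) (f i y) ↔ (Gs i).Adj x y)
    (hconn : ∀ i, (Gs i).Connected) (i : ι) (x y : Vi i) :
    H.Reachable (f i x) (f i y) := by
  obtain ⟨p⟩ := (hconn i) x y
  exact ⟨p.map ⟨f i, fun hxy => (hiff i _ _).2 hxy⟩⟩

lemma amal_dist_eq
    (hadj0 : ∀ i, (Gs i).Adj (u0 i) (w0 i))
    (hinj : ∀ i, Function.Injective (f i))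
    (hu : ∀ i, f i (u0 i) = u) (hw : ∀ i, f i (w0 i) = w)
    (hiff : ∀ i x y, H.Adj (f i x) (f i y) ↔ (Gs i).Adj x y)
    (hsep : ∀ i j x y, i ≠ j → f i x = f j y → f i x = u ∨ f i x = w)
    (hedge : ∀ a b : V, H.Adj a b → ∃ i x y, f i x = a ∧ f i y = b)
    (hconn : ∀ i, (Gs i).Connected) (i : ι) (x y : Vi i) :
    H.dist (f i x) (f i y) = (Gs i).dist x y := by
  refine le_antisymm (amal_dist_le hiff hconn i x y) ?_
  obtain ⟨p, hp⟩ := (amal_reachable hiff hconn i x y).exists_walk_length_eq_dist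
  rw [← hp]
  exact amal_pull hadj0 hinj hu hw hiff hsep hedge hconn i p.length p le_rfl x y rfl rfl

lemma amal_H_connected
    (hu : ∀ i, f i (u0 i) = u)
    (hiff : ∀ i x y, H.Adj (f i x) (f i y) ↔ (Gs i).Adj x y)
    (hsurj : ∀ a : V, ∃ i x, f i x = a)
    (hconn : ∀ i, (Gs i).Connected) (i0 : ι) :
    H.Connected := by
  have hne : Nonempty V := ⟨f i0 (u0 i0)⟩
  refine ⟨fun a b => ?_⟩
  obtain ⟨j, z, rfl⟩ := hsurj a
  obtain ⟨k, z', rfl⟩ := hsurj b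
  have h1 : H.Reachable (f j z) u := by
    rw [← hu j]; exact amal_reachable hiff hconn j z (u0 j)
  have h2 : H.Reachable (f k z') u := by
    rw [← hu k]; exact amal_reachable hiff hconn k z' (u0 k)
  exact h1.trans h2.symm

lemma amal_dist_outside
    (hadj0 : ∀ i, (Gs i).Adj (u0 i) (w0 i))
    (hinj : ∀ i, Function.Injective (f i))
    (hu : ∀ i, f i (u0 i) = u) (hw : ∀ i, f i (w0 i) = w)
    (hiff : ∀ i x y, H.Adj (f i x) (f i y) ↔ (Gs i).Adj x y)
    (hsep : ∀ i j x y, i ≠ j → f i x = f j y → f i x = u ∨ f i x = w)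
    (hsurj : ∀ a : V, ∃ i x, f i x = a)
    (hedge : ∀ a b : V, H.Adj a b → ∃ i x y, f i x = a ∧ f i y = b)
    (hconn : ∀ i, (Gs i).Connected) (i : ι)
    {a : V} (ha : a ∉ Set.range (f i)) (x : Vi i) :
    H.dist (f i x) a =
      min ((Gs i).dist x (u0 i) + H.dist u a) ((Gs i).dist x (w0 i) + H.dist w a) := by
  classical
  have hHc : H.Connected := amal_H_connected hu hiff hsurj hconn i
  have hde := amal_dist_eq hadj0 hinj hu hw hiff hsep hedge hconn i
  refine le_antisymm (le_min ?_ ?_) ?_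
  · calc H.dist (f i x) a ≤ H.dist (f i x) u + H.dist u a := hHc.dist_triangle
      _ = (Gs i).dist x (u0 i) + H.dist u a := by rw [← hu i, hde]
  · calc H.dist (f i x) a ≤ H.dist (f i x) w + H.dist w a := hHc.dist_triangle
      _ = (Gs i).dist x (w0 i) + H.dist w a := by rw [← hw i, hde]
  · obtain ⟨p, hp⟩ := hHc.exists_walk_length_eq_dist (f i x) a
    have hsplit : ∀ t ∈ p.support, H.dist (f i x) t + H.dist t a ≤ p.length := by
      intro t hts
      have := congrArg Walk.length (p.take_spec hts)
      rw [Walk.length_append] at this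
      calc H.dist (f i x) t + H.dist t a
          ≤ (p.takeUntil t hts).length + (p.dropUntil t hts).length :=
            Nat.add_le_add (SimpleGraph.dist_le _) (SimpleGraph.dist_le _)
        _ = p.length := this
    rcases amal_passes hsep hedge i p ⟨x, rfl⟩ ha with h1 | h1
    · calc min _ _ ≤ (Gs i).dist x (u0 i) + H.dist u a := min_le_left _ _
        _ = H.dist (f i x) u + H.dist u a := by rw [← hu i, hde]
        _ ≤ p.length := hsplit u h1
        _ = H.dist (f i x) a := hp
    · calc min _ _ ≤ (Gs i).dist x (w0 i) + H.dist w a := min_le_right _ _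
        _ = H.dist (f i x) w + H.dist w a := by rw [← hw i, hde]
        _ ≤ p.length := hsplit w h1
        _ = H.dist (f i x) a := hp

end Aux

theorem stmt13 {V : Type*} [Fintype V] (n : ℕ) (hn : 1 ≤ n)
    {Vi : Fin n → Type*} [∀ i, Fintype (Vi i)]
    (Gs : ∀ i, SimpleGraph (Vi i)) (hconn : ∀ i, (Gs i).Connected)
    (u0 w0 : ∀ i, Vi i) (H : SimpleGraph V) (u w : V)
    (f : ∀ i, Vi i → V)
    (h : IsEdgeAmalMap Gs u0 w0 H u w f)
    (W : Finset V) (hW : resolves H W) :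
    ∀ i, (metricDim (Gs i) : ℤ) - 2 ≤
      (((W : Set V)) ∩ (f i '' {x | x ≠ u0 i ∧ x ≠ w0 i})).ncard := by
  classical
  obtain ⟨hadj0, hinj, hu, hw0, hiff, hsep, hsurj, hedge⟩ := h
  intro i
  set F : Finset (Vi i) :=
    Finset.univ.filter (fun z => f i z ∈ W ∧ z ≠ u0 i ∧ z ≠ w0 i) with hF
  set T : Finset (Vi i) := F ∪ {u0 i, w0 i} with hT
  have hde := amal_dist_eq hadj0 hinj hu hw0 hiff hsep hedge hconn i
  have hu0T : u0 i ∈ T := by simp [hT]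
  have hw0T : w0 i ∈ T := by simp [hT]
  have hres : resolves (Gs i) T := by
    intro x y hxy
    have key : ∀ a ∈ W, H.dist (f i x) a = H.dist (f i y) a := by
      intro a ha
      by_cases hr : a ∈ Set.range (f i)
      · obtain ⟨z, rfl⟩ := hr
        rw [hde x z, hde y z]
        have hzT : z ∈ T := by
          rcases eq_or_ne z (u0 i) with rfl | hz1
          · exact hu0T
          rcases eq_or_ne z (w0 i) with rfl | hz2
          · exact hw0T
          simp [hT, hF, ha, hz1, hz2]
        exact hxy z hzT
      · rw [amal_dist_outside hadj0 hinj hu hw0 hiff hsep hsurj hedge hconn i hr x,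
            amal_dist_outside hadj0 hinj hu hw0 hiff hsep hsurj hedge hconn i hr y,
            hxy (u0 i) hu0T, hxy (w0 i) hw0T]
    exact hinj i (hW _ _ key)
  have hdim : metricDim (Gs i) ≤ T.card := Nat.sInf_le ⟨T, hres, rfl⟩
  have hcard : T.card ≤ F.card + 2 := by
    calc T.card ≤ F.card + ({u0 i, w0 i} : Finset (Vi i)).card :=
          Finset.card_union_le _ _
      _ ≤ F.card + 2 := by
          have : ({u0 i, w0 i} : Finset (Vi i)).card ≤ 2 :=
            (Finset.card_insert_le _ _).trans (by simp)
          omega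
  have hset : ((W : Set V)) ∩ (f i '' {x | x ≠ u0 i ∧ x ≠ w0 i}) =
      f i '' (F : Set (Vi i)) := by
    ext a
    simp only [Set.mem_inter_iff, Set.mem_image, Set.mem_setOf_eq, hF,
      Finset.coe_filter, Finset.mem_coe, Finset.mem_univ, true_and]
    constructor
    · rintro ⟨haW, z, hz, rfl⟩
      exact ⟨z, ⟨haW, hz.1, hz.2⟩, rfl⟩
    · rintro ⟨z, ⟨haW, h1, h2⟩, rfl⟩
      exact ⟨haW, z, ⟨h1, h2⟩, rfl⟩
  have hn2 : (((W : Set V)) ∩ (f i '' {x | x ≠ u0 i ∧ x ≠ w0 i})).ncard = F.card := by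
    rw [hset, Set.ncard_image_of_injective _ (hinj i), Set.ncard_coe_finset]
  rw [hn2]
  have := hdim.trans hcard
  omega
end

section
/- Let G be the vertex-amalgamation of n ≥ 2 paths (each with terminal vertex an internal, non-leaf vertex) and complete graphs of order at least 3, consisting of k paths and n − k complete graphs K_{m_1},…,K_{m_{n-k}}. Then dim(G) = Σ_{i=1}^{n-k} (m_i − 2) + max(k, 1) + (k − 1) when k ≥ 1; in particular, replacing one complete graph block by such a path increases the metric dimension formula Σ dim(G_i) − n by exactly one per replaced path. -/
open SimpleGraph

/-!
Distances in a vertex amalgamation add up through the common vertex `v`, and inside a block they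
are the block's own distances. Hence the non-root vertices of a clique are twins with respect to
every set avoiding them, so a resolving set contains all but one of them. In a path block, the
neighbour of the root on a side (an arm) that contains no landmark is at distance `d(v, w) + 1`
from every landmark `w`; two such neighbours cannot be told apart, so at most one of the `2k` arms
is free of landmarks. This gives the lower bound `∑ (mᵢ - 2) + 2k - 1`. It is attained by all clique
vertices except the root and one other, both ends of every path block but one, and one end of the
remaining path block.
-/

open Finset

namespace SimpleGraph

variable {V V' : Type*} {G : SimpleGraph V} {G' : SimpleGraph V'}

lemma Walk.exists_length_le_of_adj_or_eq (p : V → V')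
    (hp : ∀ a b, G.Adj a b → G'.Adj (p a) (p b) ∨ p a = p b) {u v : V} (w : G.Walk u v) :
    ∃ w' : G'.Walk (p u) (p v), w'.length ≤ w.length := by
  induction w with
  | nil => exact ⟨.nil, le_rfl⟩
  | cons h _ ih =>
    obtain ⟨w', hw'⟩ := ih
    rcases hp _ _ h with hadj | heq
    · exact ⟨.cons hadj w', by simpa using hw'⟩
    · exact ⟨heq ▸ w', by simp only [Walk.length_cons]; grind [Walk.length_copy]⟩

lemma dist_le_of_adj_or_eq (p : V → V')
    (hp : ∀ a b, G.Adj a b → G'.Adj (p a) (p b) ∨ p a = p b) {u v : V} (hr : G.Reachable u v) :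
    G'.dist (p u) (p v) ≤ G.dist u v := by
  obtain ⟨w, hw⟩ := hr.exists_walk_length_eq_dist
  obtain ⟨w', hw'⟩ := w.exists_length_le_of_adj_or_eq p hp
  exact (dist_le w').trans (hw ▸ hw')

lemma pathGraph_dist_le_of_add_eq {n : ℕ} (d : ℕ) {x y : Fin n} (hxy : x.val + d = y.val) :
    (pathGraph n).dist x y ≤ d := by
  induction d generalizing x with
  | zero => simp [Fin.ext (by simpa using hxy)]
  | succ d ih =>
    set x' : Fin n := ⟨x + 1, by omega⟩
    have hadj : (pathGraph n).Adj x x' := pathGraph_adj.mpr (.inl rfl)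
    have hx'y := ih (x := x') (by simp [x']; omega)
    calc (pathGraph n).dist x y ≤ (pathGraph n).dist x x' + (pathGraph n).dist x' y :=
          hadj.reachable.dist_triangle_left y
      _ ≤ d + 1 := by rw [dist_eq_one_iff_adj.mpr hadj]; omega

lemma Walk.natDist_le_length_of_pathGraph {n : ℕ} {x y : Fin n} (w : (pathGraph n).Walk x y) :
    Nat.dist x y ≤ w.length := by
  induction w with
  | nil => simp
  | @cons a b c h q ih =>
    have hab : Nat.dist a b = 1 := by
      rcases pathGraph_adj.mp h with h | h <;> simp only [Nat.dist] <;> omega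
    calc Nat.dist a c ≤ Nat.dist a b + Nat.dist b c := Nat.dist.triangle_inequality _ _ _
      _ ≤ q.length + 1 := by omega
      _ = _ := (Walk.length_cons h q).symm

lemma pathGraph_dist {n : ℕ} (x y : Fin n) : (pathGraph n).dist x y = Nat.dist x y := by
  refine le_antisymm ?_ ?_
  · rcases le_total x.val y.val with hle | hle
    · exact (pathGraph_dist_le_of_add_eq (y - x) (by omega)).trans (by simp [Nat.dist])
    · rw [dist_comm]
      exact (pathGraph_dist_le_of_add_eq (x - y) (by omega)).trans (by simp [Nat.dist])
  · obtain ⟨w, hw⟩ := (pathGraph_preconnected n x y).exists_walk_length_eq_dist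
    exact hw ▸ w.natDist_le_length_of_pathGraph

lemma exists_pathGraph_adj_compare_eq {n : ℕ} {c : Fin n} (h0 : (c : ℕ) ≠ 0)
    (h1 : (c : ℕ) ≠ n - 1) {o : Ordering} (ho : o ≠ .eq) :
    ∃ x, (pathGraph n).Adj x c ∧ compare x c = o := by
  cases o
  · exact ⟨⟨c - 1, by omega⟩, pathGraph_adj.mpr (.inl (by simp; omega)),
      compare_lt_iff_lt.mpr (Fin.lt_def.mpr (by simp; omega))⟩
  · exact absurd rfl ho
  · exact ⟨⟨c + 1, by omega⟩, pathGraph_adj.mpr (.inr rfl),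
      compare_gt_iff_gt.mpr (Fin.lt_def.mpr (by simp))⟩

end SimpleGraph

section MetricDimension

variable {V : Type*} {G : SimpleGraph V}

lemma resolves.card_le_one {W s : Finset V} (hW : resolves G W)
    (hs : ∀ u ∈ s, ∀ u' ∈ s, ∀ w ∈ W, G.dist u w = G.dist u' w) : s.card ≤ 1 :=
  Finset.card_le_one.mpr fun u hu u' hu' => hW u u' (hs u hu u' hu')

lemma metricDim_eq_of_le [Fintype V] {W : Finset V} {c : ℕ} (hW : resolves G W)
    (hc : W.card ≤ c) (hmin : ∀ W' : Finset V, resolves G W' → c ≤ W'.card) :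
    metricDim G = c := by
  have hmem : W.card ∈ {k | ∃ W : Finset V, resolves G W ∧ W.card = k} := ⟨W, hW, rfl⟩
  exact le_antisymm ((Nat.sInf_le hmem).trans hc)
    (le_csInf ⟨_, hmem⟩ (by rintro _ ⟨W', hW', rfl⟩; exact hmin W' hW'))

end MetricDimension

section VertexAmalgamation

variable {ι V : Type*} {Vi : ι → Type*} {Gs : ∀ i, SimpleGraph (Vi i)} {v0 : ∀ i, Vi i}
  {G : SimpleGraph V} {v : V} {f : ∀ i, Vi i → V}

open Classical in
noncomputable def blockRetract (f : ∀ i, Vi i → V) (v0 : ∀ i, Vi i) (i : ι) (a : V) : Vi i :=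
  if h : ∃ x, f i x = a then h.choose else v0 i

open Classical in
noncomputable def blockHits [∀ i, Fintype (Vi i)] (f : ∀ i, Vi i → V) (v0 : ∀ i, Vi i)
    (W : Finset V) (i : ι) : Finset (Vi i) :=
  {x ∈ univ.erase (v0 i) | f i x ∈ W}

namespace IsVertexAmalMap

lemma injective (hf : IsVertexAmalMap Gs v0 G v f) (i : ι) : Function.Injective (f i) := hf.1 i

lemma apply_root (hf : IsVertexAmalMap Gs v0 G v f) (i : ι) : f i (v0 i) = v := hf.2.1 i

lemma adj_apply_iff (hf : IsVertexAmalMap Gs v0 G v f) {i : ι} {x y : Vi i} :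
    G.Adj (f i x) (f i y) ↔ (Gs i).Adj x y :=
  hf.2.2.1 i x y

lemma eq_root_of_apply_eq (hf : IsVertexAmalMap Gs v0 G v f) {i j : ι} {x : Vi i} {y : Vi j}
    (hij : i ≠ j) (h : f i x = f j y) : f i x = v :=
  hf.2.2.2.1 i j x y hij h

lemma exists_apply_eq (hf : IsVertexAmalMap Gs v0 G v f) (a : V) : ∃ i x, f i x = a :=
  hf.2.2.2.2.1 a

lemma exists_apply_eq_apply_eq_of_adj (hf : IsVertexAmalMap Gs v0 G v f) {a b : V}
    (hab : G.Adj a b) : ∃ i x y, f i x = a ∧ f i y = b :=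
  hf.2.2.2.2.2 a b hab

lemma apply_ne_of_ne (hf : IsVertexAmalMap Gs v0 G v f) {i : ι} {x : Vi i} (hx : x ≠ v0 i) :
    f i x ≠ v :=
  fun h => hx (hf.injective i (h.trans (hf.apply_root i).symm))

lemma injOn_sigma (hf : IsVertexAmalMap Gs v0 G v f) :
    Set.InjOn (fun q : Σ i, Vi i => f q.1 q.2) {q | q.2 ≠ v0 q.1} := by
  rintro ⟨i, x⟩ hx ⟨j, y⟩ - hxy
  by_cases hij : i = j
  · subst hij
    simp only at hxy
    rw [hf.injective i hxy]
  · exact absurd (hf.eq_root_of_apply_eq hij hxy) (hf.apply_ne_of_ne hx)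

lemma blockRetract_apply_self (hf : IsVertexAmalMap Gs v0 G v f) {i : ι} (x : Vi i) :
    blockRetract f v0 i (f i x) = x := by
  have h : ∃ y, f i y = f i x := ⟨x, rfl⟩
  rw [blockRetract, dif_pos h]
  exact hf.injective i h.choose_spec

lemma blockRetract_apply_of_ne (hf : IsVertexAmalMap Gs v0 G v f) {i l : ι} (hli : l ≠ i)
    (z : Vi l) : blockRetract f v0 i (f l z) = v0 i := by
  rw [blockRetract]
  split_ifs with h
  · exact hf.injective i
      ((hf.eq_root_of_apply_eq hli.symm h.choose_spec).trans (hf.apply_root i).symm)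
  · rfl

lemma adj_or_eq_blockRetract (hf : IsVertexAmalMap Gs v0 G v f) (i : ι) {a b : V}
    (hab : G.Adj a b) :
    (Gs i).Adj (blockRetract f v0 i a) (blockRetract f v0 i b) ∨
      blockRetract f v0 i a = blockRetract f v0 i b := by
  obtain ⟨l, x, y, rfl, rfl⟩ := hf.exists_apply_eq_apply_eq_of_adj hab
  by_cases hl : l = i
  · subst hl
    rw [hf.blockRetract_apply_self, hf.blockRetract_apply_self]
    exact .inl (hf.adj_apply_iff.mp hab)
  · rw [hf.blockRetract_apply_of_ne hl, hf.blockRetract_apply_of_ne hl]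
    exact .inr rfl

def blockHom (hf : IsVertexAmalMap Gs v0 G v f) (i : ι) : Gs i →g G where
  toFun := f i
  map_rel' h := hf.adj_apply_iff.mpr h

lemma reachable (hf : IsVertexAmalMap Gs v0 G v f) {i : ι} (hi : (Gs i).Connected)
    (x y : Vi i) : G.Reachable (f i x) (f i y) :=
  (hi x y).map (hf.blockHom i)

lemma connected (hf : IsVertexAmalMap Gs v0 G v f) (hconn : ∀ i, (Gs i).Connected) :
    G.Connected := by
  have : Nonempty V := ⟨v⟩
  refine ⟨fun a b => ?_⟩
  obtain ⟨i, x, rfl⟩ := hf.exists_apply_eq a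
  obtain ⟨j, y, rfl⟩ := hf.exists_apply_eq b
  have hxv := hf.reachable (hconn i) x (v0 i)
  have hvy := hf.reachable (hconn j) (v0 j) y
  rw [hf.apply_root] at hxv hvy
  exact hxv.trans hvy

lemma dist_apply_apply (hf : IsVertexAmalMap Gs v0 G v f) {i : ι} (hi : (Gs i).Connected)
    (x y : Vi i) : G.dist (f i x) (f i y) = (Gs i).dist x y := by
  refine le_antisymm ?_ ?_
  · obtain ⟨w, hw⟩ := (hi x y).exists_walk_length_eq_dist
    have h := dist_le (w.map (hf.blockHom i))
    rwa [Walk.length_map, hw] at h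
  · simpa [hf.blockRetract_apply_self] using
      dist_le_of_adj_or_eq _ (fun a b => hf.adj_or_eq_blockRetract i) (hf.reachable hi x y)

lemma dist_apply_root (hf : IsVertexAmalMap Gs v0 G v f) {i : ι} (hi : (Gs i).Connected)
    (x : Vi i) : G.dist (f i x) v = (Gs i).dist x (v0 i) := by
  rw [← hf.apply_root i, hf.dist_apply_apply hi]

lemma dist_root_apply (hf : IsVertexAmalMap Gs v0 G v f) {i : ι} (hi : (Gs i).Connected)
    (x : Vi i) : G.dist v (f i x) = (Gs i).dist (v0 i) x := by
  rw [dist_comm, hf.dist_apply_root hi, dist_comm]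

lemma exists_apply_eq_of_root_notMem_support (hf : IsVertexAmalMap Gs v0 G v f) (i : ι)
    {a b : V} (w : G.Walk a b) (hv : v ∉ w.support) (ha : ∃ x, f i x = a) :
    ∃ y, f i y = b := by
  induction w with
  | nil => exact ha
  | @cons c d e h q ih =>
    obtain ⟨l, x, y, rfl, rfl⟩ := hf.exists_apply_eq_apply_eq_of_adj h
    obtain ⟨x', hx'⟩ := ha
    by_cases hl : l = i
    · subst hl
      exact ih (fun hm => hv (by simp [hm])) ⟨y, rfl⟩
    · exact absurd (hf.eq_root_of_apply_eq hl hx'.symm) (fun h => hv (by simp [h]))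

lemma root_mem_support (hf : IsVertexAmalMap Gs v0 G v f) {i j : ι} (hij : i ≠ j)
    {x : Vi i} {y : Vi j} (hy : y ≠ v0 j) (w : G.Walk (f i x) (f j y)) : v ∈ w.support := by
  by_contra hv
  obtain ⟨z, hz⟩ := hf.exists_apply_eq_of_root_notMem_support i w hv ⟨x, rfl⟩
  exact hf.apply_ne_of_ne hy (hz ▸ hf.eq_root_of_apply_eq hij hz)

lemma dist_of_ne (hf : IsVertexAmalMap Gs v0 G v f) (hconn : ∀ i, (Gs i).Connected)
    {i j : ι} (hij : i ≠ j) (x : Vi i) (y : Vi j) :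
    G.dist (f i x) (f j y) = (Gs i).dist x (v0 i) + (Gs j).dist (v0 j) y := by
  classical
  rw [← hf.dist_apply_root (hconn i), ← hf.dist_root_apply (hconn j)]
  by_cases hy : y = v0 j
  · subst hy
    rw [hf.apply_root, dist_self, add_zero]
  refine le_antisymm ((hf.connected hconn).dist_triangle) ?_
  obtain ⟨w, hw⟩ := (hf.connected hconn).preconnected (f i x) (f j y) |>.exists_walk_length_eq_dist
  have hv := hf.root_mem_support hij hy w
  rw [← hw, ← w.take_spec hv, Walk.length_append]
  exact add_le_add (dist_le _) (dist_le _)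

lemma sum_card_blockHits_le [Fintype ι] [∀ i, Fintype (Vi i)]
    (hf : IsVertexAmalMap Gs v0 G v f) (W : Finset V) :
    ∑ i, (blockHits f v0 W i).card ≤ W.card := by
  rw [← card_sigma]
  refine card_le_card_of_injOn (fun q => f q.1 q.2) ?_ (hf.injOn_sigma.mono ?_) <;>
    rintro ⟨i, x⟩ hq <;> simp only [coe_sigma, Set.mem_sigma_iff, mem_coe, blockHits,
      mem_filter, mem_erase, mem_univ, and_true, true_and] at hq
  exacts [hq.2, hq.1]

lemma resolves_of (hf : IsVertexAmalMap Gs v0 G v f) (hconn : ∀ i, (Gs i).Connected)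
    {W : Finset V}
    (hsame : ∀ i (x y : Vi i), f i x ∉ W → f i y ∉ W →
      (∀ w ∈ W, G.dist (f i x) w = G.dist (f i y) w) → x = y)
    (hcross : ∀ i j (x : Vi i) (y : Vi j), i ≠ j → x ≠ v0 i → y ≠ v0 j → f i x ∉ W →
      f j y ∉ W → ¬ ∀ w ∈ W, G.dist (f i x) w = G.dist (f j y) w) :
    resolves G W := by
  intro a b hab
  have hG := hf.connected hconn
  by_cases ha : a ∈ W
  · exact (hG.dist_eq_zero_iff.mp ((hab a ha).symm.trans dist_self)).symm
  by_cases hb : b ∈ W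
  · exact hG.dist_eq_zero_iff.mp ((hab b hb).trans dist_self)
  obtain ⟨i, x, rfl⟩ := hf.exists_apply_eq a
  obtain ⟨j, y, rfl⟩ := hf.exists_apply_eq b
  have hroot : f i (v0 i) = f j (v0 j) := (hf.apply_root i).trans (hf.apply_root j).symm
  by_cases hx : x = v0 i
  · subst hx
    rw [hroot] at ha hab ⊢
    exact congrArg _ (hsame j _ _ ha hb hab)
  by_cases hy : y = v0 j
  · subst hy
    rw [← hroot] at hb hab ⊢
    exact congrArg _ (hsame i _ _ ha hb hab)
  by_cases hij : i = j
  · subst hij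
    exact congrArg _ (hsame i _ _ ha hb hab)
  · exact absurd hab (hcross i j x y hij hx hy ha hb)

lemma dist_eq_of_eq_top (hf : IsVertexAmalMap Gs v0 G v f) (hconn : ∀ i, (Gs i).Connected)
    {i : ι} (hi : Gs i = ⊤) {x x' : Vi i} (hx : x ≠ v0 i) (hx' : x' ≠ v0 i) {w : V}
    (hxw : f i x ≠ w) (hx'w : f i x' ≠ w) : G.dist (f i x) w = G.dist (f i x') w := by
  obtain ⟨l, z, rfl⟩ := hf.exists_apply_eq w
  by_cases hl : l = i
  · subst hl
    rw [hf.dist_apply_apply (hconn l), hf.dist_apply_apply (hconn l), hi,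
      dist_top_of_ne (ne_of_apply_ne _ hxw), dist_top_of_ne (ne_of_apply_ne _ hx'w)]
  · rw [hf.dist_of_ne hconn (Ne.symm hl), hf.dist_of_ne hconn (Ne.symm hl), hi,
      dist_top_of_ne hx, dist_top_of_ne hx']

lemma card_sub_two_le_card_blockHits [∀ i, Fintype (Vi i)] (hf : IsVertexAmalMap Gs v0 G v f)
    (hconn : ∀ i, (Gs i).Connected) {W : Finset V} (hW : resolves G W) {i : ι}
    (hi : Gs i = ⊤) : Fintype.card (Vi i) - 2 ≤ (blockHits f v0 W i).card := by
  classical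
  have hmiss : {x ∈ univ.erase (v0 i) | f i x ∉ W}.card ≤ 1 := by
    rw [← card_image_of_injective _ (hf.injective i)]
    refine hW.card_le_one ?_
    simp only [mem_image, mem_filter, mem_erase, mem_univ, and_true]
    rintro _ ⟨x, ⟨hx, hxW⟩, rfl⟩ _ ⟨x', ⟨hx', hx'W⟩, rfl⟩ w hw
    exact hf.dist_eq_of_eq_top hconn hi hx hx' (ne_of_mem_of_not_mem hw hxW).symm
      (ne_of_mem_of_not_mem hw hx'W).symm
  have hsplit := card_filter_add_card_filter_not (s := univ.erase (v0 i)) (f i · ∈ W)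
  rw [card_erase_of_mem (mem_univ _), card_univ] at hsplit
  unfold blockHits
  omega

lemma not_forall_dist_eq_of_eq_top (hf : IsVertexAmalMap Gs v0 G v f)
    (hconn : ∀ i, (Gs i).Connected) {i j : ι} (hi : Gs i = ⊤) (hij : i ≠ j) {x z : Vi i}
    {y : Vi j} (hy : y ≠ v0 j) (hz : z ≠ v0 i) {W : Finset V} (hzW : f i z ∈ W)
    (hxW : f i x ∉ W) : ¬ ∀ w ∈ W, G.dist (f i x) w = G.dist (f j y) w := by
  intro h
  have hdist := h _ hzW
  rw [hf.dist_apply_apply (hconn i), hf.dist_of_ne hconn hij.symm, hi,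
    dist_top_of_ne (ne_of_apply_ne _ (ne_of_mem_of_not_mem hzW hxW).symm),
    dist_top_of_ne hz.symm] at hdist
  have := (hconn j).pos_dist_of_ne hy
  omega

end IsVertexAmalMap

end VertexAmalgamation

section PathCliqueAmalgamation

variable {ι V : Type*} {sz : ι → ℕ} {Gs : ∀ i, SimpleGraph (Fin (sz i))}
  {v0 : ∀ i, Fin (sz i)} {G : SimpleGraph V} {v : V} {f : ∀ i, Fin (sz i) → V}

namespace IsVertexAmalMap

lemma dist_eq_dist_root_add_one (hf : IsVertexAmalMap Gs v0 G v f)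
    (hconn : ∀ i, (Gs i).Connected) {i : ι} (hi : Gs i = pathGraph (sz i)) {x : Fin (sz i)}
    (hx : (pathGraph (sz i)).Adj x (v0 i)) {W : Finset V}
    (hW : ∀ z, f i z ∈ W → compare z (v0 i) ≠ compare x (v0 i)) {w : V} (hw : w ∈ W) :
    G.dist (f i x) w = G.dist v w + 1 := by
  obtain ⟨l, z, rfl⟩ := hf.exists_apply_eq w
  rw [hf.dist_root_apply (hconn l)]
  by_cases hl : l = i
  · subst hl
    have hside := hW z hw
    rw [hf.dist_apply_apply (hconn l), hi, pathGraph_dist, pathGraph_dist]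
    rcases pathGraph_adj.mp hx with h | h
    · have hxv : compare x (v0 l) = .lt := compare_lt_iff_lt.mpr (Fin.lt_def.mpr (by omega))
      rw [hxv, Ne, compare_lt_iff_lt, not_lt, Fin.le_def] at hside
      simp only [Nat.dist]
      omega
    · have hxv : compare x (v0 l) = .gt := compare_gt_iff_gt.mpr (Fin.lt_def.mpr (by omega))
      rw [hxv, Ne, compare_gt_iff_gt, not_lt, Fin.le_def] at hside
      simp only [Nat.dist]
      omega
  · rw [hf.dist_of_ne hconn (Ne.symm hl), hi, dist_eq_one_iff_adj.mpr hx, add_comm]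

lemma eq_of_forall_compare_ne (hf : IsVertexAmalMap Gs v0 G v f)
    (hconn : ∀ i, (Gs i).Connected) {W : Finset V} (hW : resolves G W) {i j : ι}
    (hi : Gs i = pathGraph (sz i)) (hj : Gs j = pathGraph (sz j))
    (hvi : (v0 i : ℕ) ≠ 0 ∧ (v0 i : ℕ) ≠ sz i - 1) (hvj : (v0 j : ℕ) ≠ 0 ∧ (v0 j : ℕ) ≠ sz j - 1)
    {o o' : Ordering} (ho : o ≠ .eq) (ho' : o' ≠ .eq)
    (hiW : ∀ z, f i z ∈ W → compare z (v0 i) ≠ o) (hjW : ∀ z, f j z ∈ W → compare z (v0 j) ≠ o') :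
    (i, o) = (j, o') := by
  obtain ⟨x, hx, rfl⟩ := exists_pathGraph_adj_compare_eq hvi.1 hvi.2 ho
  obtain ⟨y, hy, rfl⟩ := exists_pathGraph_adj_compare_eq hvj.1 hvj.2 ho'
  have hxy : f i x = f j y := hW _ _ fun w hw =>
    (hf.dist_eq_dist_root_add_one hconn hi hx hiW hw).trans
      (hf.dist_eq_dist_root_add_one hconn hj hy hjW hw).symm
  obtain ⟨rfl, h⟩ := Sigma.mk.inj_iff.mp
    (hf.injOn_sigma (x₁ := ⟨i, x⟩) (x₂ := ⟨j, y⟩) hx.ne hy.ne hxy)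
  rw [eq_of_heq h]

lemma two_mul_card_le_sum_card_blockHits_add_one (hf : IsVertexAmalMap Gs v0 G v f)
    (hconn : ∀ i, (Gs i).Connected) {W : Finset V} (hW : resolves G W) {P : Finset ι}
    (hP : ∀ i ∈ P, Gs i = pathGraph (sz i))
    (hv0 : ∀ i ∈ P, (v0 i : ℕ) ≠ 0 ∧ (v0 i : ℕ) ≠ sz i - 1) :
    2 * P.card ≤ ∑ i ∈ P, (blockHits f v0 W i).card + 1 := by
  classical
  -- `(i, o)` is the arm of the path block `i` on side `o` of its root. The root's neighbours on
  -- two arms without landmarks would be twins, so at most one arm has no landmark.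
  set arms := P ×ˢ ({.lt, .gt} : Finset Ordering)
  set emptyArms := {a ∈ arms | ∀ z, f a.1 z ∈ W → compare z (v0 a.1) ≠ a.2}
  have hside : ∀ a ∈ arms, a.2 ≠ .eq := by simp [arms]; grind
  have hempty : emptyArms.card ≤ 1 := by
    refine card_le_one.mpr fun a ha b hb => ?_
    simp only [emptyArms, mem_filter] at ha hb
    exact hf.eq_of_forall_compare_ne hconn hW (hP _ (mem_product.mp ha.1).1)
      (hP _ (mem_product.mp hb.1).1) (hv0 _ (mem_product.mp ha.1).1)
      (hv0 _ (mem_product.mp hb.1).1) (hside a ha.1) (hside b hb.1) ha.2 hb.2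
  have hhit : (arms \ emptyArms).card ≤ ∑ i ∈ P, (blockHits f v0 W i).card := by
    rw [← card_sigma]
    refine card_le_card_of_surjOn (fun q => (q.1, compare q.2 (v0 q.1))) ?_
    rintro ⟨i, o⟩ h
    simp only [emptyArms, coe_sdiff, Set.mem_sdiff, mem_coe, mem_filter, not_and, not_forall,
      not_not] at h
    obtain ⟨z, hz, hzo⟩ := h.2 h.1
    refine ⟨⟨i, z⟩, ?_, by simp [hzo]⟩
    have hzv : z ≠ v0 i := fun hzv => hside _ h.1 (hzo ▸ compare_eq_iff_eq.mpr hzv)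
    simp [blockHits, (mem_product.mp h.1).1, hz, hzv]
  have harms : arms.card = 2 * P.card := by simp [arms, card_product, mul_comm]
  have := card_le_card_sdiff_add_card (s := arms) (t := emptyArms)
  omega

lemma not_forall_dist_eq_of_pathGraph (hf : IsVertexAmalMap Gs v0 G v f)
    (hconn : ∀ i, (Gs i).Connected) {i j : ι} (hi : Gs i = pathGraph (sz i)) (hij : i ≠ j)
    (x : Fin (sz i)) {y : Fin (sz j)} (hy : y ≠ v0 j) {W : Finset V}
    (hfirst : f i ⟨0, x.pos⟩ ∈ W) (hlast : f i ⟨sz i - 1, Nat.sub_lt x.pos one_pos⟩ ∈ W) :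
    ¬ ∀ w ∈ W, G.dist (f i x) w = G.dist (f j y) w := by
  intro h
  have e0 := h _ hfirst
  have e1 := h _ hlast
  rw [hf.dist_apply_apply (hconn i), hf.dist_of_ne hconn hij.symm, hi, pathGraph_dist,
    pathGraph_dist] at e0 e1
  have := (hconn j).pos_dist_of_ne hy
  have := x.2
  have := (v0 i).2
  simp only [Nat.dist] at e0 e1
  omega

end IsVertexAmalMap

section Basis

variable [DecidableEq ι] {P : Finset ι} {i0 : ι} {t : ∀ i, Fin (sz i)}

def basisBlock (v0 : ∀ i, Fin (sz i)) (P : Finset ι) (i0 : ι) (t : ∀ i, Fin (sz i)) (i : ι) :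
    Finset (Fin (sz i)) :=
  if i ∈ P then ({x : Fin (sz i) | (x : ℕ) = 0 ∨ (i ≠ i0 ∧ (x : ℕ) = sz i - 1)} : Finset _)
  else ({x | x ≠ v0 i ∧ x ≠ t i} : Finset _)

open Classical in
noncomputable def pathCliqueBasis [Fintype ι] (f : ∀ i, Fin (sz i) → V) (v0 : ∀ i, Fin (sz i))
    (P : Finset ι) (i0 : ι) (t : ∀ i, Fin (sz i)) : Finset V :=
  (univ.sigma (basisBlock v0 P i0 t)).image fun q : Σ i, Fin (sz i) => f q.1 q.2

lemma apply_mem_pathCliqueBasis [Fintype ι] {i : ι} {x : Fin (sz i)}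
    (hx : x ∈ basisBlock v0 P i0 t i) : f i x ∈ pathCliqueBasis f v0 P i0 t := by
  classical
  have hq : (⟨i, x⟩ : Σ i, Fin (sz i)) ∈ univ.sigma (basisBlock v0 P i0 t) :=
    mem_sigma.mpr ⟨mem_univ i, hx⟩
  exact mem_image_of_mem (fun q : Σ i, Fin (sz i) => f q.1 q.2) hq

lemma eq_root_or_eq_of_apply_notMem_pathCliqueBasis [Fintype ι] {i : ι} (hi : i ∉ P)
    {x : Fin (sz i)} (hx : f i x ∉ pathCliqueBasis f v0 P i0 t) : x = v0 i ∨ x = t i := by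
  by_contra h
  exact hx (apply_mem_pathCliqueBasis (by simpa [basisBlock, hi, not_or] using h))

lemma exists_ne_root_apply_mem_pathCliqueBasis [Fintype ι] {i : ι} (hi : i ∉ P)
    (hsz : 3 ≤ sz i) : ∃ z, z ≠ v0 i ∧ f i z ∈ pathCliqueBasis f v0 P i0 t := by
  obtain ⟨z, -, hz⟩ := exists_mem_notMem_of_card_lt_card (s := {v0 i, t i}) (t := univ)
    (by grw [card_le_two, card_univ, Fintype.card_fin, ← hsz]; norm_num)
  simp only [mem_insert, mem_singleton, not_or] at hz
  exact ⟨z, hz.1, apply_mem_pathCliqueBasis (by simp [basisBlock, hi, hz])⟩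

lemma card_basisBlock_of_notMem {i : ι} (hi : i ∉ P) (ht : t i ≠ v0 i) :
    (basisBlock v0 P i0 t i).card = sz i - 2 := by
  have : basisBlock v0 P i0 t i = (univ.erase (v0 i)).erase (t i) := by
    ext x
    simp [basisBlock, hi, and_comm]
  rw [this, card_erase_of_mem (mem_erase.mpr ⟨ht, mem_univ _⟩), card_erase_of_mem (mem_univ _),
    card_univ, Fintype.card_fin]
  omega

lemma card_basisBlock_le_of_mem {i : ι} (hi : i ∈ P) :
    (basisBlock v0 P i0 t i).card ≤ if i = i0 then 1 else 2 := by
  have hval : ∀ m, ({x | (x : ℕ) = m} : Finset (Fin (sz i))).card ≤ 1 := fun m =>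
    card_le_one.mpr fun a ha b hb => Fin.ext (by simp only [mem_filter] at ha hb; omega)
  rw [basisBlock, if_pos hi]
  split_ifs with h
  · simpa [h] using hval 0
  · simp only [h, ne_eq, not_false_eq_true, true_and, filter_or]
    exact (card_union_le _ _).trans (Nat.add_le_add (hval 0) (hval _))

lemma card_pathCliqueBasis_le [Fintype ι] (hi0 : i0 ∈ P) (ht : ∀ i ∉ P, t i ≠ v0 i) :
    (pathCliqueBasis f v0 P i0 t).card + 1 ≤ ∑ i ∈ univ \ P, (sz i - 2) + 2 * P.card := by
  classical
  have hpath : ∑ i ∈ P, (basisBlock v0 P i0 t i).card + 1 ≤ 2 * P.card := by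
    have hrest : ∑ i ∈ P.erase i0, (if i = i0 then 1 else 2) = 2 * (P.card - 1) := by
      rw [sum_congr rfl fun i hi => if_neg (ne_of_mem_erase hi), sum_const, smul_eq_mul,
        card_erase_of_mem hi0, mul_comm]
    have := card_pos.mpr ⟨i0, hi0⟩
    calc ∑ i ∈ P, (basisBlock v0 P i0 t i).card + 1
        ≤ ∑ i ∈ P, (if i = i0 then 1 else 2) + 1 :=
          Nat.add_le_add_right (sum_le_sum fun i hi => card_basisBlock_le_of_mem hi) 1
      _ = 2 * P.card := by rw [← add_sum_erase P _ hi0, hrest, if_pos rfl]; omega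
  have hclique : ∑ i ∈ univ \ P, (basisBlock v0 P i0 t i).card = ∑ i ∈ univ \ P, (sz i - 2) :=
    sum_congr rfl fun i hi =>
      card_basisBlock_of_notMem (mem_sdiff.mp hi).2 (ht i (mem_sdiff.mp hi).2)
  calc (pathCliqueBasis f v0 P i0 t).card + 1
      ≤ ∑ i, (basisBlock v0 P i0 t i).card + 1 := by
        grw [pathCliqueBasis, card_image_le, card_sigma]
    _ = ∑ i ∈ univ \ P, (basisBlock v0 P i0 t i).card +
          (∑ i ∈ P, (basisBlock v0 P i0 t i).card + 1) := by
        rw [← sum_sdiff (subset_univ P)]; ring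
    _ ≤ _ := by omega

namespace IsVertexAmalMap

lemma resolves_pathCliqueBasis [Fintype ι] (hf : IsVertexAmalMap Gs v0 G v f)
    (hconn : ∀ i, (Gs i).Connected) (hP : ∀ i ∈ P, Gs i = pathGraph (sz i))
    (hK : ∀ i ∉ P, Gs i = ⊤) (hi0 : i0 ∈ P) (ht : ∀ i ∉ P, t i ≠ v0 i)
    (hsz : ∀ i ∉ P, 3 ≤ sz i) : resolves G (pathCliqueBasis f v0 P i0 t) := by
  set W := pathCliqueBasis f v0 P i0 t
  have hfirst (i : ι) (hi : i ∈ P) (x : Fin (sz i)) : f i ⟨0, x.pos⟩ ∈ W :=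
    apply_mem_pathCliqueBasis (by simp [basisBlock, hi])
  have hlast (i : ι) (hi : i ∈ P) (hii0 : i ≠ i0) (x : Fin (sz i)) :
      f i ⟨sz i - 1, Nat.sub_lt x.pos one_pos⟩ ∈ W :=
    apply_mem_pathCliqueBasis (by simp [basisBlock, hi, hii0])
  refine hf.resolves_of hconn (fun i x y hx hy hxy => ?_) (fun i j x y hij hx hy hxW hyW h => ?_)
  · by_cases hi : i ∈ P
    · have hd := hxy _ (hfirst i hi x)
      rw [hf.dist_apply_apply (hconn i), hf.dist_apply_apply (hconn i), hP i hi, pathGraph_dist,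
        pathGraph_dist] at hd
      exact Fin.ext (by simpa [Nat.dist] using hd)
    · have hii0 : i ≠ i0 := fun h => hi (h ▸ hi0)
      have hd := hxy _ (hfirst i0 hi0 (v0 i0))
      rw [hf.dist_of_ne hconn hii0, hf.dist_of_ne hconn hii0, hK i hi, dist_top, dist_top,
        add_left_inj] at hd
      rcases eq_root_or_eq_of_apply_notMem_pathCliqueBasis hi hx with rfl | rfl <;>
        rcases eq_root_or_eq_of_apply_notMem_pathCliqueBasis hi hy with rfl | rfl <;>
        simp_all
  · by_cases hi : i ∈ P
    · by_cases hj : j ∈ P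
      · by_cases hii0 : i = i0
        · subst hii0
          exact hf.not_forall_dist_eq_of_pathGraph hconn (hP j hj) hij.symm y hx (hfirst j hj y)
            (hlast j hj hij.symm y) fun w hw => (h w hw).symm
        · exact hf.not_forall_dist_eq_of_pathGraph hconn (hP i hi) hij x hy (hfirst i hi x)
            (hlast i hi hii0 x) h
      · obtain ⟨z, hz, hzW⟩ := exists_ne_root_apply_mem_pathCliqueBasis hj (hsz j hj)
        exact hf.not_forall_dist_eq_of_eq_top hconn (hK j hj) hij.symm hx hz hzW hyW
          fun w hw => (h w hw).symm
    · obtain ⟨z, hz, hzW⟩ := exists_ne_root_apply_mem_pathCliqueBasis hi (hsz i hi)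
      exact hf.not_forall_dist_eq_of_eq_top hconn (hK i hi) hij hy hz hzW hxW h

end IsVertexAmalMap

end Basis

end PathCliqueAmalgamation

theorem stmt18_general {V : Type*} [Fintype V] (n k : ℕ) (hk : 1 ≤ k)
    (sz : Fin n → ℕ) (hsz : ∀ i, 3 ≤ sz i)
    (P : Finset (Fin n)) (hP : P.card = k)
    (Gs : ∀ i, SimpleGraph (Fin (sz i)))
    (hGsP : ∀ i ∈ P, Gs i = SimpleGraph.pathGraph (sz i))
    (hGsK : ∀ i ∉ P, Gs i = (⊤ : SimpleGraph (Fin (sz i))))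
    (v0 : ∀ i, Fin (sz i))
    (hv0 : ∀ i ∈ P, (v0 i : ℕ) ≠ 0 ∧ (v0 i : ℕ) ≠ sz i - 1)
    (G : SimpleGraph V) (v : V)
    (h : IsVertexAmal Gs v0 G v) :
    metricDim G = (∑ i ∈ Finset.univ \ P, (sz i - 2)) + max k 1 + (k - 1) := by
  obtain ⟨f, hf⟩ := h
  have hconn (i : Fin n) : (Gs i).Connected := by
    have : Nonempty (Fin (sz i)) := ⟨v0 i⟩
    by_cases hi : i ∈ P
    · rw [hGsP i hi]
      exact ⟨pathGraph_preconnected _⟩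
    · rw [hGsK i hi]
      exact connected_top
  obtain ⟨i0, hi0⟩ : P.Nonempty := card_pos.mp (by omega)
  choose t ht using fun i =>
    have := Fin.nontrivial_iff_two_le.mpr ((show 2 ≤ 3 by norm_num).trans (hsz i))
    exists_ne (v0 i)
  rw [max_eq_left hk]
  refine metricDim_eq_of_le (hf.resolves_pathCliqueBasis hconn hGsP hGsK hi0 (fun i _ => ht i)
    (fun i _ => hsz i)) ?_ fun W hW => ?_
  · have := card_pathCliqueBasis_le (f := f) hi0 fun i _ => ht i
    omega
  · have hsum := hf.sum_card_blockHits_le W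
    rw [← sum_sdiff (subset_univ P)] at hsum
    have hclique : ∑ i ∈ univ \ P, (sz i - 2) ≤ ∑ i ∈ univ \ P, (blockHits f v0 W i).card :=
      sum_le_sum fun i hi => by
        simpa using hf.card_sub_two_le_card_blockHits hconn hW (hGsK i (mem_sdiff.mp hi).2)
    have hpath := hf.two_mul_card_le_sum_card_blockHits_add_one hconn hW hGsP hv0
    omega

theorem stmt18 {V : Type*} [Fintype V] (n k : ℕ) (hn : 2 ≤ n) (hk : 1 ≤ k)
    (hkn : k ≤ n)
    (sz : Fin n → ℕ) (hsz : ∀ i, 3 ≤ sz i)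
    (P : Finset (Fin n)) (hP : P.card = k)
    (Gs : ∀ i, SimpleGraph (Fin (sz i)))
    (hGsP : ∀ i ∈ P, Gs i = SimpleGraph.pathGraph (sz i))
    (hGsK : ∀ i ∉ P, Gs i = (⊤ : SimpleGraph (Fin (sz i))))
    (v0 : ∀ i, Fin (sz i))
    (hv0 : ∀ i ∈ P, (v0 i : ℕ) ≠ 0 ∧ (v0 i : ℕ) ≠ sz i - 1)
    (G : SimpleGraph V) (v : V)
    (h : IsVertexAmal Gs v0 G v) :
    metricDim G = (∑ i ∈ Finset.univ \ P, (sz i - 2)) + max k 1 + (k - 1) :=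
  stmt18_general n k hk sz hsz P hP Gs hGsP hGsK v0 hv0 G v h
end
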